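/- arXiv:1206.5109 — 3 statements merged into one kernel-verified Lean document; each statement's English description precedes it below -/
import Mathlib

section
/- Let $\gamma \in (0,1)$. There is a constant $C > 0$ such that for every integer $n \ge 1$, $\bigl| \int_0^{\pi} s^{\gamma-1} e^{ins}\, ds \;-\; n^{-\gamma}\, e^{i\pi\gamma/2}\, \Gamma(\gamma) \bigr| \le C / n$. -/
/-!
Put `f(z) = z^(γ-1) e^(itz)` (principal branch), holomorphic off `(-∞, 0]`. Cauchy's theorem on the
rectangle `[0, a] × [0, R]` turns `∫₀^a f` into the integrals over the three other sides. On the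
imaginary axis `i f(iy) = e^(iπγ/2) y^(γ-1) e^(-ty)`, whose integral over `(0, ∞)` is
`e^(iπγ/2) t^(-γ) Γ(γ)`; the top side is `O(R^(γ-1))` and the right side is at most
`a^(γ-1) ∫₀^∞ e^(-ty) dy = a^(γ-1)/t`. Letting `R → ∞` bounds the error by `a^(γ-1)/t`.
-/

open MeasureTheory Complex Real

open Set Filter Topology

lemma integral_exp_neg_mul_le {t : ℝ} (ht : 0 < t) (R : ℝ) :
    ∫ y in 0..R, Real.exp (-(t * y)) ≤ 1 / t := by
  rw [intervalIntegral.integral_comp_mul_left (fun u => Real.exp (-u)) ht.ne',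
    intervalIntegral.integral_comp_neg, integral_exp, smul_eq_mul, one_div]
  simp only [mul_zero, neg_zero, Real.exp_zero]
  exact mul_le_of_le_one_right (inv_pos.2 ht).le (by linarith [Real.exp_pos (-(t * R))])

lemma tendsto_integral_nhdsGT_left {E : Type*} [NormedAddCommGroup E] [NormedSpace ℝ E]
    {f : ℝ → E} {a b : ℝ} (hab : a < b) (hf : IntervalIntegrable f volume a b) :
    Tendsto (fun ε => ∫ x in ε..b, f x) (𝓝[>] a) (𝓝 (∫ x in a..b, f x)) := by
  refine ContinuousWithinAt.mono_of_mem_nhdsWithin ?_ (Icc_mem_nhdsGT hab)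
  rw [← uIcc_of_le hab.le]
  exact intervalIntegral.continuousOn_primitive_interval_left
    ((intervalIntegrable_iff' (μ := volume)).1 hf) a left_mem_uIcc

noncomputable def oscKernel (γ t : ℝ) (z : ℂ) : ℂ :=
  z ^ ((γ : ℂ) - 1) * cexp (I * t * z)

namespace oscKernel

variable {γ t : ℝ}

lemma norm_eq {z : ℂ} : ‖oscKernel γ t z‖ = ‖z‖ ^ (γ - 1) * Real.exp (-(t * z.im)) := by
  have : (γ : ℂ) - 1 = ((γ - 1 : ℝ) : ℂ) := by push_cast; ring
  rw [oscKernel, norm_mul, this, norm_cpow_real, Complex.norm_exp]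
  simp [mul_re]

lemma norm_le (hγ : γ ≤ 1) {z : ℂ} {r : ℝ} (hr : 0 < r) (hrz : r ≤ ‖z‖) :
    ‖oscKernel γ t z‖ ≤ r ^ (γ - 1) * Real.exp (-(t * z.im)) := by
  rw [norm_eq]
  gcongr ?_ * _
  exact Real.rpow_le_rpow_of_nonpos hr hrz (by linarith)

lemma norm_le_of_im_nonneg (hγ : γ ≤ 1) (ht : 0 ≤ t) {z : ℂ} (him : 0 ≤ z.im) {r : ℝ}
    (hr : 0 < r) (hrz : r ≤ ‖z‖) : ‖oscKernel γ t z‖ ≤ r ^ (γ - 1) := by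
  refine (norm_le hγ hr hrz).trans (mul_le_of_le_one_right (by positivity) ?_)
  rw [Real.exp_le_one_iff, neg_nonpos]
  positivity

lemma differentiableAt {z : ℂ} (hz : z ∈ slitPlane) : DifferentiableAt ℂ (oscKernel γ t) z :=
  (differentiableAt_id.cpow_const hz).mul (by fun_prop)

lemma continuousAt {z : ℂ} (hz : z ∈ slitPlane) : ContinuousAt (oscKernel γ t) z :=
  (differentiableAt hz).continuousAt

lemma measurable : Measurable (oscKernel γ t) := by
  unfold oscKernel
  fun_prop

lemma intervalIntegrable_ofReal (hγ : 0 < γ) {b : ℝ} (hb : 0 ≤ b) :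
    IntervalIntegrable (fun s : ℝ => oscKernel γ t s) volume 0 b := by
  refine (intervalIntegral.intervalIntegrable_rpow' (r := γ - 1) (by linarith)).mono_fun' ?_ ?_
  · exact (measurable.comp measurable_ofReal).aestronglyMeasurable
  · rw [uIoc_of_le hb]
    filter_upwards [ae_restrict_mem measurableSet_Ioc] with s hs
    simp [norm_eq, abs_of_pos hs.1]

lemma integral_boundary_rect_eq_zero {ε a R : ℝ} (hε : 0 < ε) (hεa : ε ≤ a) :
    (∫ x in ε..a, oscKernel γ t x) - (∫ x in ε..a, oscKernel γ t (x + R * I)) +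
      I • (∫ y in 0..R, oscKernel γ t (a + y * I)) -
      I • (∫ y in 0..R, oscKernel γ t (ε + y * I)) = 0 := by
  have hdiff : DifferentiableOn ℂ (oscKernel γ t)
      (uIcc (ε : ℂ).re (a + R * I).re ×ℂ uIcc (ε : ℂ).im (a + R * I).im) := by
    rintro z ⟨hre, -⟩
    refine (differentiableAt (mem_slitPlane_iff.2 (Or.inl ?_))).differentiableWithinAt
    simp only [mem_preimage, ofReal_re, add_re, mul_re, I_re, I_im, ofReal_im, mul_zero,
      mul_one, sub_zero, add_zero, uIcc_of_le hεa] at hre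
    exact hε.trans_le hre.1
  simpa using integral_boundary_rect_eq_zero_of_differentiableOn _ _ _ hdiff

lemma continuousAt_integral_vertical (hγ₀ : 0 < γ) (hγ₁ : γ ≤ 1) (ht : 0 ≤ t) {R : ℝ}
    (hR : 0 ≤ R) : ContinuousAt (fun ε : ℝ => ∫ y in 0..R, oscKernel γ t (ε + y * I)) 0 := by
  refine intervalIntegral.continuousAt_of_dominated_interval (bound := fun y => y ^ (γ - 1))
    ?_ ?_ (intervalIntegral.intervalIntegrable_rpow' (by linarith)) ?_
  · exact Eventually.of_forall fun ε => (measurable.comp (by fun_prop)).aestronglyMeasurable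
  · refine Eventually.of_forall fun ε => Eventually.of_forall fun y hy => ?_
    rw [uIoc_of_le hR] at hy
    have him : (ε + y * I : ℂ).im = y := by simp
    refine norm_le_of_im_nonneg hγ₁ ht (by rw [him]; exact hy.1.le) hy.1 ?_
    simpa [him, abs_of_pos hy.1] using abs_im_le_norm (ε + y * I : ℂ)
  · refine Eventually.of_forall fun y hy => ?_
    rw [uIoc_of_le hR] at hy
    have hslit : ((0 : ℝ) + y * I : ℂ) ∈ slitPlane :=
      mem_slitPlane_iff.2 (Or.inr (by simp [hy.1.ne']))
    exact (continuousAt hslit).comp (f := fun ε : ℝ => (ε + y * I : ℂ)) (by fun_prop)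

/-- The corner `0` is an integrable singularity, so Cauchy's theorem is applied on `[ε, a] × [0, R]`
and `ε → 0⁺`. -/
lemma integral_eq_contour (hγ₀ : 0 < γ) (hγ₁ : γ ≤ 1) (ht : 0 ≤ t) {a R : ℝ} (ha : 0 < a)
    (hR : 0 < R) :
    ∫ x in 0..a, oscKernel γ t x =
      (∫ x in 0..a, oscKernel γ t (x + R * I)) - I • (∫ y in 0..R, oscKernel γ t (a + y * I)) +
        I • ∫ y in 0..R, oscKernel γ t (y * I) := by
  have hbottom := tendsto_integral_nhdsGT_left ha (intervalIntegrable_ofReal (t := t) hγ₀ ha.le)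
  have hcont : Continuous fun x : ℝ => oscKernel γ t (x + R * I) :=
    continuous_iff_continuousAt.2 fun x =>
      (continuousAt (mem_slitPlane_iff.2 (Or.inr (by simp [hR.ne'])))).comp (by fun_prop)
  have htop := tendsto_integral_nhdsGT_left ha (hcont.intervalIntegrable 0 a)
  have hleft := (continuousAt_integral_vertical hγ₀ hγ₁ ht hR.le).continuousWithinAt
    (s := Ioi 0) |>.tendsto
  simp only [ofReal_zero, zero_add] at hleft
  refine tendsto_nhds_unique_of_eventuallyEq hbottom
    ((htop.sub_const _).add (hleft.const_smul I)) ?_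
  filter_upwards [Ioc_mem_nhdsGT ha] with ε hε
  linear_combination (integral_boundary_rect_eq_zero (γ := γ) (t := t) (R := R) hε.1 hε.2)

lemma I_mul_apply_ofReal_mul_I {y : ℝ} (hy : 0 < y) :
    I * oscKernel γ t (y * I) =
      cexp (I * π * γ / 2) * ((y ^ (γ - 1) * Real.exp (-(t * y)) : ℝ) : ℂ) := by
  have hpow : ((y : ℂ) * I) ^ ((γ : ℂ) - 1) = cexp ((Real.log y + π / 2 * I) * (γ - 1)) := by
    rw [cpow_def_of_ne_zero (by simp [hy.ne']), log_ofReal_mul hy I_ne_zero, log_I]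
  have hexp : I * t * (y * I) = -(t * y : ℂ) := by linear_combination (t * y : ℂ) * I_sq
  rw [oscKernel, hpow, hexp, Real.rpow_def_of_pos hy]
  nth_rewrite 1 [← exp_pi_div_two_mul_I]
  push_cast
  simp only [← Complex.exp_add]
  congr 1
  ring

lemma tendsto_I_smul_integral_imaginaryAxis (hγ₀ : 0 < γ) (ht : 0 < t) :
    Tendsto (fun R : ℝ => I • ∫ y in 0..R, oscKernel γ t (y * I)) atTop
      (𝓝 ((t ^ (-γ) : ℝ) * cexp (I * π * γ / 2) * (Real.Gamma γ : ℂ))) := by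
  have hint : IntegrableOn (fun y : ℝ => y ^ (γ - 1) * Real.exp (-(t * y))) (Ioi 0) := by
    refine (integrableOn_rpow_mul_exp_neg_mul_rpow (s := γ - 1) (by linarith) one_pos
      ht).congr_fun (fun y _ => ?_) measurableSet_Ioi
    simp [Real.rpow_one]
  have hreal := intervalIntegral_tendsto_integral_Ioi 0 hint tendsto_id
  rw [Real.integral_rpow_mul_exp_neg_mul_Ioi hγ₀ ht, one_div, Real.inv_rpow ht.le,
    ← Real.rpow_neg ht.le] at hreal
  have hlim := (continuous_ofReal.tendsto _ |>.comp hreal).const_mul (cexp (I * π * γ / 2))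
  refine (hlim.congr' ?_).trans_eq ?_
  · filter_upwards [eventually_ge_atTop 0] with R hR
    rw [Function.comp_apply, id_eq, smul_eq_mul, ← intervalIntegral.integral_const_mul,
      ← intervalIntegral.integral_ofReal, ← intervalIntegral.integral_const_mul]
    refine intervalIntegral.integral_congr_ae (Eventually.of_forall fun y hy => ?_)
    rw [uIoc_of_le hR] at hy
    exact (I_mul_apply_ofReal_mul_I hy.1).symm
  · congr 1
    push_cast
    ring

lemma norm_integral_horizontal_le (hγ₁ : γ ≤ 1) (ht : 0 ≤ t) {a R : ℝ} (ha : 0 ≤ a)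
    (hR : 0 < R) : ‖∫ x in 0..a, oscKernel γ t (x + R * I)‖ ≤ R ^ (γ - 1) * a := by
  have hbound : ∀ x ∈ uIoc 0 a, ‖oscKernel γ t (x + R * I)‖ ≤ R ^ (γ - 1) := fun x _ => by
    have him : (x + R * I : ℂ).im = R := by simp
    refine norm_le_of_im_nonneg hγ₁ ht (by rw [him]; exact hR.le) hR ?_
    simpa [him, abs_of_pos hR] using abs_im_le_norm (x + R * I : ℂ)
  simpa [abs_of_nonneg ha] using intervalIntegral.norm_integral_le_of_norm_le_const hbound

lemma norm_integral_vertical_le (hγ₁ : γ ≤ 1) (ht : 0 < t) {a R : ℝ} (ha : 0 < a) (hR : 0 ≤ R) :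
    ‖∫ y in 0..R, oscKernel γ t (a + y * I)‖ ≤ a ^ (γ - 1) / t := by
  have hbound : ∀ᵐ y, y ∈ Ioc 0 R →
      ‖oscKernel γ t (a + y * I)‖ ≤ a ^ (γ - 1) * Real.exp (-(t * y)) := by
    refine Eventually.of_forall fun y _ => ?_
    have hre : (a + y * I : ℂ).re = a := by simp
    have him : (a + y * I : ℂ).im = y := by simp
    have hnorm : a ≤ ‖(a + y * I : ℂ)‖ := by
      simpa [hre, abs_of_pos ha] using abs_re_le_norm (a + y * I : ℂ)
    simpa only [him] using norm_le (t := t) hγ₁ ha hnorm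
  calc ‖∫ y in 0..R, oscKernel γ t (a + y * I)‖
      ≤ ∫ y in 0..R, a ^ (γ - 1) * Real.exp (-(t * y)) :=
        intervalIntegral.norm_integral_le_of_norm_le hR hbound
          (Continuous.intervalIntegrable (by fun_prop) _ _)
    _ ≤ a ^ (γ - 1) * (1 / t) := by
        rw [intervalIntegral.integral_const_mul]
        exact mul_le_mul_of_nonneg_left (integral_exp_neg_mul_le ht R) (by positivity)
    _ = a ^ (γ - 1) / t := mul_one_div _ _

lemma norm_integral_sub_le (hγ : γ ∈ Ioo 0 1) (ht : 0 < t) {a : ℝ} (ha : 0 < a) :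
    ‖(∫ s in 0..a, oscKernel γ t s) -
        (t ^ (-γ) : ℝ) * cexp (I * π * γ / 2) * (Real.Gamma γ : ℂ)‖ ≤ a ^ (γ - 1) / t := by
  have hleft := tendsto_I_smul_integral_imaginaryAxis hγ.1 ht
  set Λ : ℂ := (t ^ (-γ) : ℝ) * cexp (I * π * γ / 2) * (Real.Gamma γ : ℂ)
  have htop : Tendsto (fun R : ℝ => R ^ (γ - 1) * a) atTop (𝓝 0) := by
    simpa using (tendsto_rpow_neg_atTop (y := 1 - γ) (by linarith [hγ.2])).mul_const a
  have hmajorant : Tendsto (fun R : ℝ => R ^ (γ - 1) * a + a ^ (γ - 1) / t +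
      ‖I • (∫ y in 0..R, oscKernel γ t (y * I)) - Λ‖) atTop (𝓝 (a ^ (γ - 1) / t)) := by
    simpa using (htop.add_const (a ^ (γ - 1) / t)).add (hleft.sub_const Λ).norm
  refine ge_of_tendsto hmajorant ?_
  filter_upwards [eventually_gt_atTop 0] with R hR
  rw [integral_eq_contour hγ.1 hγ.2.le ht.le ha hR]
  calc _ = ‖(∫ x in 0..a, oscKernel γ t (x + R * I)) +
          -(I • ∫ y in 0..R, oscKernel γ t (a + y * I)) +
          (I • (∫ y in 0..R, oscKernel γ t (y * I)) - Λ)‖ := by congr 1; abel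
    _ ≤ _ := norm_add₃_le
    _ ≤ _ := by
      rw [norm_neg, norm_smul, norm_I, one_mul]
      gcongr
      · exact norm_integral_horizontal_le hγ.2.le ht.le ha.le hR
      · exact norm_integral_vertical_le hγ.2.le ht ha hR.le

end oscKernel

/-- For `γ ∈ (0,1)` there is `C > 0` such that for every integer `n ≥ 1`,
`|∫_0^π s^{γ-1} e^{ins} ds - n^{-γ} e^{iπγ/2} Γ(γ)| ≤ C / n`. -/
theorem oscillatory_integral_asymptotics (γ : ℝ) (hγ : γ ∈ Set.Ioo (0 : ℝ) 1) :
    ∃ C : ℝ, 0 < C ∧ ∀ n : ℕ, 1 ≤ n →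
      ‖(∫ s in (0 : ℝ)..π, (s : ℂ) ^ ((γ : ℂ) - 1) * Complex.exp (Complex.I * n * s)) -
          ((n : ℝ) ^ (-γ) : ℝ) * Complex.exp (Complex.I * π * γ / 2) * (Real.Gamma γ : ℂ)‖ ≤
        C / n := by
  refine ⟨π ^ (γ - 1), by positivity, fun n hn => ?_⟩
  simpa [oscKernel] using oscKernel.norm_integral_sub_le hγ (t := n) (by exact_mod_cast hn) pi_pos
end

section
/- Let $f : [0,\infty) \to \mathbb{R}$ be non-negative, antitone (non-increasing), and convex on $[0,\infty)$, and integrable on $[0,2\pi]$. Then $\int_0^{2\pi} f(x) \cos(x)\, dx \ge 0$. -/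
open MeasureTheory Real Set

lemma convex_diff_aux (f : ℝ → ℝ) (hconv : ConvexOn ℝ (Ici (0 : ℝ)) f)
    {x y : ℝ} (hx : 0 ≤ x) (hxy : x ≤ y) :
    f y + f (x + π) ≤ f x + f (y + π) := by
  rcases eq_or_lt_of_le hxy with rfl | hlt
  · linarith
  have hpi := pi_pos
  have hd : 0 < y - x := by linarith
  have hD : 0 < y - x + π := by positivity
  have ht0 : 0 ≤ (y - x) / (y - x + π) := by positivity
  have ht1 : 0 ≤ 1 - (y - x) / (y - x + π) := by
    have : (y - x) / (y - x + π) ≤ 1 := by rw [div_le_one hD]; linarith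
    linarith
  have hxm : x ∈ Ici (0 : ℝ) := hx
  have hym : y + π ∈ Ici (0 : ℝ) := by
    simp only [mem_Ici]; linarith
  have h1 := hconv.2 hxm hym ht1 ht0 (by ring)
  have h2 := hconv.2 hxm hym ht0 ht1 (by ring)
  have e1 : (1 - (y - x) / (y - x + π)) • x + ((y - x) / (y - x + π)) • (y + π) = y := by
    simp only [smul_eq_mul]
    field_simp
    ring
  have e2 : ((y - x) / (y - x + π)) • x + (1 - (y - x) / (y - x + π)) • (y + π) = x + π := by
    simp only [smul_eq_mul]
    field_simp
    ring
  rw [e1] at h1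
  rw [e2] at h2
  simp only [smul_eq_mul] at h1 h2
  linarith

/-- If `f : [0,∞) → ℝ` is non-negative, non-increasing and convex on
`[0,∞)`, and integrable on `[0,2π]`, then `∫_0^{2π} f(x) cos x dx ≥ 0`. -/
theorem integral_cos_nonneg_of_antitone_convex (f : ℝ → ℝ)
    (hnonneg : ∀ x ∈ Ici (0 : ℝ), 0 ≤ f x)
    (hmono : AntitoneOn f (Ici (0 : ℝ))) (hconv : ConvexOn ℝ (Ici (0 : ℝ)) f)
    (hint : IntegrableOn f (Icc (0 : ℝ) (2 * π))) :
    0 ≤ ∫ x in (0 : ℝ)..(2 * π), f x * Real.cos x := by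
  have hpi := pi_pos
  set g : ℝ → ℝ := fun x => f x - f (x + π) with hg
  -- integrabilities
  have hfI : IntervalIntegrable f volume 0 (2 * π) := by
    rw [intervalIntegrable_iff_integrableOn_Icc_of_le (by linarith)]
    exact hint
  have hfc : IntervalIntegrable (fun x => f x * Real.cos x) volume 0 (2 * π) :=
    hfI.mul_continuousOn (Real.continuous_cos.continuousOn)
  have hfc1 : IntervalIntegrable (fun x => f x * Real.cos x) volume 0 π :=
    hfc.mono_set (by rw [uIcc_of_le (by linarith : (0:ℝ) ≤ π), uIcc_of_le (by linarith : (0:ℝ) ≤ 2*π)]; exact Icc_subset_Icc le_rfl (by linarith))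
  have hfc2 : IntervalIntegrable (fun x => f x * Real.cos x) volume π (2 * π) :=
    hfc.mono_set (by rw [uIcc_of_le (by linarith : π ≤ 2*π), uIcc_of_le (by linarith : (0:ℝ) ≤ 2*π)]; exact Icc_subset_Icc (by linarith) le_rfl)
  -- integrability of shifted function on [0, π]
  have hfshift : IntervalIntegrable (fun x => f (x + π) * Real.cos (x + π)) volume 0 π := by
    have := hfc2.comp_add_right π
    rw [show π - π = (0:ℝ) by ring, show 2*π - π = π by ring] at this
    exact this
  have hfshift' : IntervalIntegrable (fun x => f (x + π) * Real.cos x) volume 0 π := by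
    have heq : (fun x => f (x + π) * Real.cos x) = fun x => -(f (x + π) * Real.cos (x + π)) := by
      funext x; rw [Real.cos_add_pi]; ring
    rw [heq]
    exact hfshift.neg
  -- g * cos integrable on [0, π]
  have hgc : IntervalIntegrable (fun x => g x * Real.cos x) volume 0 π := by
    have heq : (fun x => g x * Real.cos x)
        = fun x => f x * Real.cos x - f (x + π) * Real.cos x := by
      funext x; simp only [hg]; ring
    rw [heq]
    exact hfc1.sub hfshift'
  -- Step 1: reduce to ∫_0^π g cos
  have step1 : (∫ x in (0:ℝ)..(2*π), f x * Real.cos x)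
      = ∫ x in (0:ℝ)..π, g x * Real.cos x := by
    have hsplit := intervalIntegral.integral_add_adjacent_intervals hfc1 hfc2
    have hshift : (∫ x in (0:ℝ)..π, f (x + π) * Real.cos (x + π))
        = ∫ x in π..(2*π), f x * Real.cos x := by
      have := intervalIntegral.integral_comp_add_right (a := (0:ℝ)) (b := π)
        (fun x => f x * Real.cos x) π
      rw [zero_add, show π + π = 2*π by ring] at this
      exact this
    have h2 : (∫ x in π..(2*π), f x * Real.cos x)
        = - ∫ x in (0:ℝ)..π, f (x + π) * Real.cos x := by
      rw [← hshift, ← intervalIntegral.integral_neg]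
      congr 1
      funext x
      rw [Real.cos_add_pi]
      ring
    rw [← hsplit, h2, ← sub_eq_add_neg, ← intervalIntegral.integral_sub hfc1 hfshift']
    congr 1
    funext x
    simp only [hg]
    ring
  rw [step1]
  -- g is antitone on [0, ∞)
  have hganti : ∀ x y : ℝ, 0 ≤ x → x ≤ y → g y ≤ g x := by
    intro x y hx hxy
    have := convex_diff_aux f hconv hx hxy
    simp only [hg]; linarith
  -- Step 2: split [0,π] at π/2 and reflect
  have hgc1 : IntervalIntegrable (fun x => g x * Real.cos x) volume 0 (π/2) :=
    hgc.mono_set (by rw [uIcc_of_le (by linarith : (0:ℝ) ≤ π/2), uIcc_of_le (by linarith : (0:ℝ) ≤ π)]; exact Icc_subset_Icc le_rfl (by linarith))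
  have hgc2 : IntervalIntegrable (fun x => g x * Real.cos x) volume (π/2) π :=
    hgc.mono_set (by rw [uIcc_of_le (by linarith : π/2 ≤ π), uIcc_of_le (by linarith : (0:ℝ) ≤ π)]; exact Icc_subset_Icc (by linarith) le_rfl)
  have hrefl : IntervalIntegrable (fun x => g (π - x) * Real.cos (π - x)) volume 0 (π/2) := by
    have := (hgc2.comp_sub_left π).symm
    rw [show π - π = (0:ℝ) by ring, show π - π/2 = π/2 by ring] at this
    exact this
  have hreflint : (∫ x in (0:ℝ)..(π/2), g (π - x) * Real.cos (π - x))
      = ∫ x in (π/2)..π, g x * Real.cos x := by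
    have := intervalIntegral.integral_comp_sub_left (a := (0:ℝ)) (b := π/2)
      (fun x => g x * Real.cos x) π
    rw [sub_zero, show π - π/2 = π/2 by ring] at this
    exact this
  have step2 : (∫ x in (0:ℝ)..π, g x * Real.cos x)
      = ∫ x in (0:ℝ)..(π/2), (g x - g (π - x)) * Real.cos x := by
    rw [← intervalIntegral.integral_add_adjacent_intervals hgc1 hgc2, ← hreflint]
    rw [← intervalIntegral.integral_add hgc1 hrefl]
    congr 1
    funext x
    rw [Real.cos_pi_sub]
    ring
  rw [step2]
  apply intervalIntegral.integral_nonneg (by linarith)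
  intro u hu
  obtain ⟨hu0, hu2⟩ := hu
  have hcos : 0 ≤ Real.cos u := Real.cos_nonneg_of_mem_Icc ⟨by linarith, hu2⟩
  have hle : g (π - u) ≤ g u := hganti u (π - u) hu0 (by linarith)
  have hsub : 0 ≤ g u - g (π - u) := by linarith
  positivity
end

section
/- Let $\gamma \in (0,1)$ and $a \ge 0$. Then $\int_0^{2\pi} (a + x)^{\gamma - 1} \cos(x)\, dx \ge 0$ (the integral converges absolutely since $\gamma - 1 > -1$). -/
/-!
Folding `[0, 2π]` onto `[0, π]` by `x ↦ 2π - x` and then onto `[0, π/2]` by `x ↦ π - x` turns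
`∫₀^{2π} f x cos x` into `∫₀^{π/2} (f x + f (2π - x) - f (π - x) - f (π + x)) cos x`. The points
`π - x ≤ π + x` lie between `x` and `2π - x` and have the same sum, so for convex `f` the bracket
is nonnegative. Here `f x = (a + x) ^ (γ - 1)` is convex because `γ - 1 ≤ 0`, and integrable because
`γ - 1 > -1`.
-/

open MeasureTheory Real Set

theorem convexOn_rpow_of_nonpos {p : ℝ} (hp : p ≤ 0) : ConvexOn ℝ (Ioi 0) fun x : ℝ ↦ x ^ p := by
  refine MonotoneOn.convexOn_of_deriv (convex_Ioi 0)
    (continuousOn_id.rpow_const fun x hx ↦ Or.inl (ne_of_gt hx))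
    (fun x hx ↦ (differentiableAt_rpow_const_of_ne p
      (ne_of_gt (interior_subset hx : x ∈ Ioi (0 : ℝ)))).differentiableWithinAt) ?_
  rw [interior_Ioi, deriv_rpow_const']
  intro x hx y _ hxy
  exact mul_le_mul_of_nonpos_left (rpow_le_rpow_of_nonpos hx hxy (by linarith)) hp

theorem ConvexOn.map_add_map_le_map_add_map {𝕜 : Type*} [Field 𝕜] [LinearOrder 𝕜]
    [IsStrictOrderedRing 𝕜] {s : Set 𝕜} {f : 𝕜 → 𝕜} (hf : ConvexOn 𝕜 s f) {a b c d : 𝕜}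
    (ha : a ∈ s) (hd : d ∈ s) (hab : a ≤ b) (hbd : b ≤ d) (hsum : b + c = a + d) :
    f b + f c ≤ f a + f d := by
  obtain rfl | hab := hab.eq_or_lt
  · obtain rfl : c = d := by linarith
    rfl
  obtain rfl | hbd := hbd.eq_or_lt
  · obtain rfl : c = a := by linarith
    exact (add_comm _ _).le
  obtain rfl : c = a + d - b := by linarith
  have hb := hf.secant_mono_aux1 ha hd hab hbd
  have hc := hf.secant_mono_aux1 ha hd (y := a + d - b) (by linarith) (by linarith)
  refine le_of_mul_le_mul_left ?_ (sub_pos.2 (hab.trans hbd))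
  linarith

theorem intervalIntegral.integral_eq_integral_add_comp_sub {E : Type*} [NormedAddCommGroup E]
    [NormedSpace ℝ E] {g : ℝ → E} {c : ℝ} (hg : IntervalIntegrable g volume 0 (2 * c)) :
    ∫ x in 0..2 * c, g x = ∫ x in 0..c, (g x + g (2 * c - x)) := by
  have hc : c ∈ uIcc 0 (2 * c) :=
    mem_uIcc.2 (by rcases le_total 0 c with h | h <;> [left; right] <;> constructor <;> linarith)
  have h₁ : IntervalIntegrable g volume 0 c := hg.mono_set (uIcc_subset_uIcc left_mem_uIcc hc)
  have h₂ : IntervalIntegrable g volume c (2 * c) :=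
    hg.mono_set (uIcc_subset_uIcc hc right_mem_uIcc)
  have h₂' : IntervalIntegrable (fun x ↦ g (2 * c - x)) volume 0 c := by
    simpa [two_mul] using (h₂.comp_sub_left (2 * c)).symm
  rw [integral_add h₁ h₂', ← integral_add_adjacent_intervals h₁ h₂, integral_comp_sub_left]
  congr 2 <;> ring

/-- Convexity is only asked on the open interval, so `f` may blow up, or take a junk value,
at the endpoints. -/
theorem ConvexOn.integral_mul_cos_nonneg {f : ℝ → ℝ} (hf : ConvexOn ℝ (Ioo 0 (2 * π)) f)
    (hfi : IntervalIntegrable f volume 0 (2 * π)) :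
    0 ≤ ∫ x in 0..2 * π, f x * cos x := by
  set g : ℝ → ℝ := fun x ↦ f x * cos x
  have hπ : 2 * (π / 2) = π := by ring
  have hg : IntervalIntegrable g volume 0 (2 * π) := hfi.mul_continuousOn continuousOn_cos
  have hg' : IntervalIntegrable (fun x ↦ g (2 * π - x)) volume 0 (2 * π) := by
    simpa using (hg.comp_sub_left (2 * π)).symm
  have hk : IntervalIntegrable (fun x ↦ g x + g (2 * π - x)) volume 0 (2 * (π / 2)) :=
    (hg.add hg').mono_set <| uIcc_subset_uIcc left_mem_uIcc <| by
      rw [hπ]; exact mem_uIcc_of_le pi_pos.le (by linarith [pi_pos])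
  have hfold := intervalIntegral.integral_eq_integral_add_comp_sub hk
  rw [hπ] at hfold
  rw [intervalIntegral.integral_eq_integral_add_comp_sub hg, hfold,
    intervalIntegral.integral_of_le (by positivity)]
  refine setIntegral_nonneg measurableSet_Ioc fun x ⟨hx₀, hx₁⟩ ↦ ?_
  have hconvex : f (π - x) + f (2 * π - (π - x)) ≤ f x + f (2 * π - x) :=
    hf.map_add_map_le_map_add_map ⟨hx₀, by linarith [pi_pos]⟩ ⟨by linarith, by linarith⟩
      (by linarith) (by linarith) (by ring)
  have hcos : 0 ≤ cos x := cos_nonneg_of_mem_Icc ⟨by linarith, hx₁⟩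
  simp only [g, cos_two_pi_sub, cos_pi_sub]
  nlinarith

/-- For `γ ∈ (0,1)` and `a ≥ 0`, `∫_0^{2π} (a+x)^{γ-1} cos x dx ≥ 0`. -/
theorem integral_shifted_rpow_cos_nonneg (γ : ℝ) (hγ : γ ∈ Set.Ioo (0 : ℝ) 1)
    (a : ℝ) (ha : 0 ≤ a) :
    0 ≤ ∫ x in (0 : ℝ)..(2 * π), (a + x) ^ (γ - 1) * Real.cos x := by
  have hconvex : ConvexOn ℝ (Ioo 0 (2 * π)) fun x ↦ (a + x) ^ (γ - 1) :=
    ((convexOn_rpow_of_nonpos (by linarith [hγ.2])).translate_right a).subset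
      (fun x hx ↦ show 0 < a + x by linarith [hx.1]) (convex_Ioo _ _)
  have hint : IntervalIntegrable (fun x ↦ (a + x) ^ (γ - 1)) volume 0 (2 * π) := by
    simpa using (intervalIntegral.intervalIntegrable_rpow' (a := a) (b := a + 2 * π)
      (by linarith [hγ.1] : -1 < γ - 1)).comp_add_left a
  exact hconvex.integral_mul_cos_nonneg hint
end
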